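/- arXiv:1202.3587 — 2 statements merged into one kernel-verified Lean document; each statement's English description precedes it below -/
import Mathlib

section
/- Let A_n be the n×n tridiagonal matrix with main diagonal entries (3, 1, ..., 1), subdiagonal entries all -1, and superdiagonal entries all 2. Then det(A_n) = J_{n+2}, the (n+2)-nd Jacobsthal number. -/
def jacobsthal : ℕ → ℤ
  | 0 => 0
  | 1 => 1
  | n + 2 => jacobsthal (n + 1) + 2 * jacobsthal n

def Amat (n : ℕ) : Matrix (Fin n) (Fin n) ℤ :=
  Matrix.of fun i j =>
    if (i : ℕ) = (j : ℕ) then (if (i : ℕ) = 0 then 3 else 1)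
    else if (i : ℕ) = (j : ℕ) + 1 then -1
    else if (j : ℕ) = (i : ℕ) + 1 then 2
    else 0

def Dmat (n : ℕ) : Matrix (Fin n) (Fin n) ℤ :=
  Matrix.of fun i j =>
    if (i : ℕ) = (j : ℕ) then 1
    else if (i : ℕ) = (j : ℕ) + 1 then -1
    else if (j : ℕ) = (i : ℕ) + 1 then 2
    else 0

lemma succAbove_one_succ {n : ℕ} (i : Fin n) :
    (((1 : Fin (n+2)).succAbove i.succ : ℕ)) = i + 2 := by
  rw [Fin.succAbove_of_le_castSucc]
  · simp only [Fin.val_succ]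
  · rw [Fin.le_def]; simp only [Fin.coe_castSucc, Fin.val_succ, Fin.val_one]; omega

lemma succAbove_one_zero {n : ℕ} :
    (((1 : Fin (n+2)).succAbove (0 : Fin (n+1)) : ℕ)) = 0 := by
  rw [Fin.succAbove_of_castSucc_lt]
  · simp
  · rw [Fin.lt_def]; simp

lemma A_eq_D {m : ℕ} (r c : Fin m) (hc : (c : ℕ) ≠ 0) : Amat m r c = Dmat m r c := by
  simp only [Amat, Dmat, Matrix.of_apply]
  split_ifs <;> first | rfl | omega | exact ‹False›.elim

lemma D_sub_succ (n : ℕ) : (Dmat (n+1)).submatrix Fin.succ Fin.succ = Dmat n := by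
  ext i j
  simp only [Matrix.submatrix_apply, Dmat, Matrix.of_apply, Fin.val_succ]
  split_ifs <;> first | rfl | omega | exact ‹False›.elim

lemma A_sub_succ (n : ℕ) : (Amat (n+1)).submatrix Fin.succ Fin.succ = Dmat n := by
  ext i j
  rw [Matrix.submatrix_apply, A_eq_D _ _ (by simp [Fin.val_succ])]
  rw [← Matrix.submatrix_apply (Dmat (n+1)) Fin.succ Fin.succ, D_sub_succ]

lemma A_sub_one (n : ℕ) : (Amat (n+2)).submatrix ((1 : Fin (n+2)).succAbove) Fin.succ
    = (Dmat (n+2)).submatrix ((1 : Fin (n+2)).succAbove) Fin.succ := by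
  ext i j
  rw [Matrix.submatrix_apply, Matrix.submatrix_apply,
    A_eq_D _ _ (by simp [Fin.val_succ])]

lemma D_minor10 (n : ℕ) :
    ((Dmat (n+2)).submatrix ((1 : Fin (n+2)).succAbove) Fin.succ).det = 2 * (Dmat n).det := by
  rw [Matrix.det_succ_row_zero, Fin.sum_univ_succ]
  have hsub : (((Dmat (n+2)).submatrix ((1 : Fin (n+2)).succAbove) Fin.succ).submatrix
      Fin.succ ((0 : Fin (n+1)).succAbove)) = Dmat n := by
    rw [Fin.succAbove_zero]
    ext i j
    simp only [Matrix.submatrix_apply, Dmat, Matrix.of_apply, succAbove_one_succ, Fin.val_succ]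
    split_ifs <;> first | rfl | omega | exact ‹False›.elim
  have h00 : (Dmat (n+2)).submatrix ((1 : Fin (n+2)).succAbove) Fin.succ 0 0 = 2 := by
    simp only [Matrix.submatrix_apply, Dmat, Matrix.of_apply, succAbove_one_zero, Fin.val_succ,
      Fin.val_zero]
    norm_num
  have h0j : ∀ j : Fin n,
      (Dmat (n+2)).submatrix ((1 : Fin (n+2)).succAbove) Fin.succ 0 j.succ = 0 := by
    intro j
    simp only [Matrix.submatrix_apply, Dmat, Matrix.of_apply, succAbove_one_zero, Fin.val_succ]
    split_ifs <;> first | rfl | omega | exact ‹False›.elim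
  rw [hsub, h00]
  rw [Finset.sum_eq_zero (fun j _ => by rw [h0j j]; ring)]
  simp

lemma detD (n : ℕ) : (Dmat n).det = jacobsthal (n + 1) := by
  induction n using Nat.strong_induction_on with
  | _ n ih =>
    match n with
    | 0 => simp [Dmat, jacobsthal, Matrix.det_fin_zero]
    | 1 => simp [Dmat, jacobsthal, Matrix.det_fin_one]
    | (n+2) =>
      rw [Matrix.det_succ_column_zero, Fin.sum_univ_succ, Fin.sum_univ_succ]
      have h0 : Dmat (n+2) 0 0 = 1 := by simp [Dmat]
      have h1 : Dmat (n+2) (Fin.succ 0) 0 = -1 := by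
        simp only [Dmat, Matrix.of_apply, Fin.val_succ, Fin.val_zero]
        norm_num
      have hz : ∀ i : Fin n, Dmat (n+2) (Fin.succ (Fin.succ i)) 0 = 0 := by
        intro i
        simp only [Dmat, Matrix.of_apply, Fin.val_succ, Fin.val_zero]
        split_ifs <;> first | rfl | omega | exact ‹False›.elim
      have hs0 : (Dmat (n+2)).submatrix ((0 : Fin (n+2)).succAbove) Fin.succ = Dmat (n+1) := by
        rw [Fin.succAbove_zero]; exact D_sub_succ (n+1)
      have hs1 : ((Dmat (n+2)).submatrix ((Fin.succ (0 : Fin (n+1))).succAbove) Fin.succ).det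
          = 2 * (Dmat n).det := by
        rw [Fin.succ_zero_eq_one]; exact D_minor10 n
      rw [h0, h1, hs0, hs1]
      rw [Finset.sum_eq_zero (fun i _ => by rw [hz i]; ring)]
      rw [ih (n+1) (by omega), ih n (by omega)]
      have hj : jacobsthal (n+2+1) = jacobsthal (n+2) + 2 * jacobsthal (n+1) := by
        show jacobsthal (n+1+2) = _
        rw [jacobsthal]
      rw [hj]
      simp only [Fin.val_zero, Fin.val_succ, pow_zero, pow_succ]
      ring

theorem det_Amat (n : ℕ) : (Amat n).det = jacobsthal (n + 2) := by
  match n with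
  | 0 => simp [Amat, jacobsthal, Matrix.det_fin_zero]
  | 1 => simp [Amat, jacobsthal, Matrix.det_fin_one]
  | (n+2) =>
    rw [Matrix.det_succ_column_zero, Fin.sum_univ_succ, Fin.sum_univ_succ]
    have h0 : Amat (n+2) 0 0 = 3 := by simp [Amat]
    have h1 : Amat (n+2) (Fin.succ 0) 0 = -1 := by
      simp only [Amat, Matrix.of_apply, Fin.val_succ, Fin.val_zero]
      norm_num
    have hz : ∀ i : Fin n, Amat (n+2) (Fin.succ (Fin.succ i)) 0 = 0 := by
      intro i
      simp only [Amat, Matrix.of_apply, Fin.val_succ, Fin.val_zero]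
      split_ifs <;> first | rfl | omega | exact ‹False›.elim
    have hs0 : (Amat (n+2)).submatrix ((0 : Fin (n+2)).succAbove) Fin.succ = Dmat (n+1) := by
      rw [Fin.succAbove_zero]; exact A_sub_succ (n+1)
    have hs1 : ((Amat (n+2)).submatrix ((Fin.succ (0 : Fin (n+1))).succAbove) Fin.succ).det
        = 2 * (Dmat n).det := by
      rw [Fin.succ_zero_eq_one, A_sub_one]; exact D_minor10 n
    rw [h0, h1, hs0, hs1]
    rw [Finset.sum_eq_zero (fun i _ => by rw [hz i]; ring)]
    rw [detD (n+1), detD n]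
    have hj : jacobsthal (n+2+2) = jacobsthal (n+2+1) + 2 * jacobsthal (n+2) := by
      rw [jacobsthal]
    have hj2 : jacobsthal (n+2+1) = jacobsthal (n+2) + 2 * jacobsthal (n+1) := by
      show jacobsthal (n+1+2) = _
      rw [jacobsthal]
    rw [hj, hj2]
    simp only [Fin.val_zero, Fin.val_succ, pow_zero, pow_succ]
    ring
end

section
/- Let T_n be the n×n tridiagonal matrix with all main diagonal entries equal to 1, all subdiagonal entries equal to 1, and all superdiagonal entries equal to 2. Then the permanent of T_n equals J_{n+1}, the (n+1)-st Jacobsthal number. -/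
def permanent {n : ℕ} (A : Matrix (Fin n) (Fin n) ℤ) : ℤ :=
  ∑ σ : Equiv.Perm (Fin n), ∏ i, A i (σ i)

def Tmat (n : ℕ) : Matrix (Fin n) (Fin n) ℤ :=
  Matrix.of fun i j =>
    if (i : ℕ) = (j : ℕ) then 1
    else if (i : ℕ) = (j : ℕ) + 1 then 1
    else if (j : ℕ) = (i : ℕ) + 1 then 2
    else 0

lemma permanent_expand_row {n : ℕ} (A : Matrix (Fin (n+1)) (Fin (n+1)) ℤ) :
    permanent A = ∑ p : Fin (n+1), A 0 p *
      permanent (A.submatrix Fin.succ (fun j => Equiv.swap 0 p j.succ)) := by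
  unfold permanent
  rw [← (Equiv.Perm.decomposeFin (n := n)).symm.sum_comp, Fintype.sum_prod_type]
  refine Finset.sum_congr rfl fun p _ => ?_
  rw [Finset.mul_sum]
  refine Finset.sum_congr rfl fun e _ => ?_
  rw [Fin.prod_univ_succ]
  simp [Equiv.Perm.decomposeFin_symm_apply_zero, Equiv.Perm.decomposeFin_symm_apply_succ,
    Matrix.submatrix]

lemma permanent_transpose {n : ℕ} (A : Matrix (Fin n) (Fin n) ℤ) :
    permanent (Matrix.transpose A) = permanent A := by
  unfold permanent
  refine Finset.sum_nbij' (fun σ => σ⁻¹) (fun σ => σ⁻¹) (by simp) (by simp) (by simp) (by simp)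
    fun σ _ => ?_
  calc ∏ i, Matrix.transpose A i (σ i) = ∏ i, A (σ i) i := rfl
    _ = ∏ i, A i (σ⁻¹ i) := by
        rw [← Equiv.prod_comp σ (fun i => A i (σ⁻¹ i))]; simp

lemma permanent_expand_col {n : ℕ} (A : Matrix (Fin (n+1)) (Fin (n+1)) ℤ) :
    permanent A = ∑ p : Fin (n+1), A p 0 *
      permanent (A.submatrix (fun j => Equiv.swap 0 p j.succ) Fin.succ) := by
  rw [← permanent_transpose A, permanent_expand_row]
  refine Finset.sum_congr rfl fun p _ => ?_
  rw [← permanent_transpose (A.submatrix _ _)]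
  rfl

lemma Tmat_entry (n : ℕ) (i j : Fin n) : Tmat n i j =
    if (i : ℕ) = (j : ℕ) then 1
    else if (i : ℕ) = (j : ℕ) + 1 then 1
    else if (j : ℕ) = (i : ℕ) + 1 then 2
    else 0 := rfl

lemma Tmat_shift (n : ℕ) : (Tmat (n+1)).submatrix Fin.succ Fin.succ = Tmat n := by
  ext i j
  simp only [Matrix.submatrix_apply, Tmat_entry, Fin.val_succ]
  split_ifs <;> omega

lemma Tmat_rec (n : ℕ) :
    permanent (Tmat (n+2)) = permanent (Tmat (n+1)) + 2 * permanent (Tmat n) := by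
  rw [permanent_expand_col (Tmat (n+1+1))]
  rw [Fin.sum_univ_succ, Fin.sum_univ_succ]
  have h0 : ∀ p : Fin n, Tmat (n+2) p.succ.succ 0 = 0 := by
    intro p; simp [Tmat_entry]
  rw [Finset.sum_eq_zero (fun p _ => by rw [h0]; ring)]
  have e1 : Tmat (n+2) 0 0 = 1 := rfl
  have e2 : Tmat (n+2) (Fin.succ 0) 0 = 1 := by
    simp [Tmat_entry]
  rw [e1, e2]
  -- first term: swap 0 0 = refl
  have hs0 : (Tmat (n+2)).submatrix (fun j : Fin (n+1) => Equiv.swap (0 : Fin (n+2)) 0 j.succ)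
      Fin.succ = Tmat (n+1) := by
    rw [Equiv.swap_self]
    exact Tmat_shift (n+1)
  rw [hs0]
  -- second term: the matrix C
  set C := (Tmat (n+2)).submatrix
      (fun j : Fin (n+1) => Equiv.swap (0 : Fin (n+2)) (Fin.succ 0) j.succ) Fin.succ with hC
  have hCper : permanent C = 2 * permanent (Tmat n) := by
    rw [permanent_expand_row C, Fin.sum_univ_succ]
    have hc0 : C 0 0 = 2 := by
      simp [hC, Matrix.submatrix_apply, Equiv.swap_apply_right, Tmat_entry]
    have hcz : ∀ p : Fin n, C 0 p.succ = 0 := by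
      intro p
      simp [hC, Matrix.submatrix_apply, Equiv.swap_apply_right, Tmat_entry]
    rw [Finset.sum_eq_zero (fun p _ => by rw [hcz]; ring), hc0, add_zero]
    congr 1
    have : C.submatrix Fin.succ (fun j : Fin n => Equiv.swap (0 : Fin (n+1)) 0 j.succ)
        = Tmat n := by
      rw [Equiv.swap_self]
      ext i j
      have hfix : Equiv.swap (0 : Fin (n+2)) (Fin.succ 0) i.succ.succ = i.succ.succ := by
        apply Equiv.swap_apply_of_ne_of_ne <;> simp [Fin.ext_iff]
      simp only [hC, Matrix.submatrix_apply, Equiv.refl_apply, hfix, Tmat_entry, Fin.val_succ]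
      split_ifs <;> omega
    rw [this]
  rw [hCper]
  ring

theorem permanent_Tmat (n : ℕ) : permanent (Tmat n) = jacobsthal (n + 1) := by
  induction n using Nat.strong_induction_on with
  | _ n ih =>
    match n with
    | 0 => decide
    | 1 => decide
    | n + 2 =>
      rw [Tmat_rec, ih (n+1) (by omega), ih n (by omega)]
      rfl
end
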